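/- Let R be a (left) nearfield which is not distributive, i.e. there exist α, β, λ ∈ R with (α+β)·λ ≠ α·λ + β·λ, and let n be a positive integer. For any vectors v_1, …, v_k ∈ R^n there exists a set J ⊆ {1, …, n} such that span(v_1, …, v_k) = { x ∈ R^n : x_j = 0 for all j ∉ J }. -/

import Mathlib

/-- A (left) nearfield: `(R,+)` is an abelian group, multiplication is associative
with identity `1 ≠ 0`, every nonzero element has a two-sided inverse,
`0` multiplies to `0` on both sides, and the left distributive law holds. -/
class Nearfield (R : Type*) extends AddCommGroup R, One R, Mul R where
  mul_assoc : ∀ a b c : R, a * b * c = a * (b * c)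
  one_mul : ∀ a : R, 1 * a = a
  mul_one : ∀ a : R, a * 1 = a
  one_ne_zero : (1 : R) ≠ 0
  zero_mul : ∀ a : R, 0 * a = 0
  mul_zero : ∀ a : R, a * 0 = 0
  left_distrib : ∀ a b c : R, a * (b + c) = a * b + a * c
  exists_inv : ∀ a : R, a ≠ 0 → ∃ b : R, a * b = 1 ∧ b * a = 1

variable {R : Type*} [Nearfield R] {n : ℕ}

/-- Right scalar multiplication on `R^n`: `(x · r) j = x j * r`. -/
def vsmul (x : Fin n → R) (r : R) : Fin n → R := fun j => x j * r

/-- An `R`-subgroup of `R^n`: an additive subgroup closed under right scalar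
multiplication. -/
def IsRSubgroup (S : Set (Fin n → R)) : Prop :=
  (0 : Fin n → R) ∈ S ∧ (∀ x ∈ S, ∀ y ∈ S, x + y ∈ S) ∧ (∀ x ∈ S, -x ∈ S) ∧
    ∀ x ∈ S, ∀ r : R, vsmul x r ∈ S

/-- `nvGen V` is the smallest `R`-subgroup of `R^n` containing `V`
(the intersection of all `R`-subgroups containing `V`). -/
def nvGen (V : Set (Fin n → R)) : Set (Fin n → R) :=
  { x | ∀ S : Set (Fin n → R), IsRSubgroup S → V ⊆ S → x ∈ S }

/-- A subspace of `R^n`: an additive subgroup `N` with `(x+y)·r − x·r ∈ N`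
for all `x ∈ R^n`, `y ∈ N`, `r ∈ R`. -/
def IsSubspace (N : Set (Fin n → R)) : Prop :=
  (0 : Fin n → R) ∈ N ∧ (∀ x ∈ N, ∀ y ∈ N, x + y ∈ N) ∧ (∀ x ∈ N, -x ∈ N) ∧
    ∀ x : Fin n → R, ∀ y ∈ N, ∀ r : R, vsmul (x + y) r - vsmul x r ∈ N

/-- `nvSpan V` is the smallest subspace of `R^n` containing `V`. -/
def nvSpan (V : Set (Fin n → R)) : Set (Fin n → R) :=
  { x | ∀ N : Set (Fin n → R), IsSubspace N → V ⊆ N → x ∈ N }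

/-- `nvLC V 0 = V` and `nvLC V (m+1)` is the set of all finite right `R`-linear
combinations of elements of `nvLC V m`. -/
def nvLC (V : Set (Fin n → R)) : ℕ → Set (Fin n → R)
  | 0 => V
  | m + 1 => { x | ∃ F : Finset (Fin n → R), ↑F ⊆ nvLC V m ∧
      ∃ lam : (Fin n → R) → R, x = ∑ w ∈ F, vsmul w (lam w) }

namespace Nearfield

theorem exists_mul_eq {a : R} (ha : a ≠ 0) (b : R) : ∃ c, a * c = b := by
  obtain ⟨a', ha', -⟩ := exists_inv a ha
  exact ⟨a' * b, by rw [← mul_assoc, ha', one_mul]⟩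

end Nearfield

theorem vsmul_zero_left (r : R) : vsmul (0 : Fin n → R) r = 0 :=
  funext fun _ => Nearfield.zero_mul r

theorem vsmul_single (j : Fin n) (a r : R) : vsmul (Pi.single j a) r = Pi.single j (a * r) := by
  funext i
  by_cases hi : i = j
  · subst hi; simp only [vsmul, Pi.single_eq_same]
  · simp only [vsmul, Pi.single_eq_of_ne hi, Nearfield.zero_mul]

namespace IsSubspace

variable {N : Set (Fin n → R)}

theorem vsmul_mem (hN : IsSubspace N) {y : Fin n → R} (hy : y ∈ N) (r : R) : vsmul y r ∈ N := by
  simpa only [zero_add, vsmul_zero_left, sub_zero] using hN.2.2.2 0 y hy r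

theorem sub_mem (hN : IsSubspace N) {x y : Fin n → R} (hx : x ∈ N) (hy : y ∈ N) : x - y ∈ N := by
  simpa only [sub_eq_add_neg] using hN.2.1 x hx (-y) (hN.2.2.1 y hy)

theorem sum_mem (hN : IsSubspace N) {ι : Type*} (s : Finset ι) {f : ι → Fin n → R}
    (hf : ∀ i ∈ s, f i ∈ N) : ∑ i ∈ s, f i ∈ N :=
  Finset.sum_induction f (· ∈ N) (fun x y hx hy => hN.2.1 x hx y hy) hN.1 hf

theorem single_mem_of_single_mem (hN : IsSubspace N) {j : Fin n} {a : R} (ha : a ≠ 0)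
    (hja : Pi.single j a ∈ N) (t : R) : Pi.single j t ∈ N := by
  obtain ⟨c, rfl⟩ := Nearfield.exists_mul_eq ha t
  simpa only [vsmul_single] using hN.vsmul_mem hja c

/-- The defect `(α + β)λ - αλ - βλ ≠ 0` of right distributivity, produced in coordinate `j` by
the subspace axiom applied to `x = α e_j` and a multiple `y` of `v` with `y j = β`, is an
element of `N` supported on `j` alone. -/
theorem exists_single_mem (hd : ∃ α β lam : R, (α + β) * lam ≠ α * lam + β * lam)
    (hN : IsSubspace N) {v : Fin n → R} (hv : v ∈ N) {j : Fin n} (hvj : v j ≠ 0) :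
    ∃ δ ≠ 0, Pi.single j δ ∈ N := by
  obtain ⟨α, β, lam, hαβ⟩ := hd
  obtain ⟨c, hc⟩ := Nearfield.exists_mul_eq hvj β
  set y := vsmul v c
  set x : Fin n → R := Pi.single j α
  have hy : y ∈ N := hN.vsmul_mem hv c
  have hdefect : vsmul (x + y) lam - vsmul x lam - vsmul y lam
      = Pi.single j ((α + β) * lam - α * lam - β * lam) := by
    funext i
    by_cases hi : i = j
    · subst hi
      simp only [vsmul, Pi.sub_apply, Pi.add_apply, x, y, Pi.single_eq_same, hc]
    · simp only [vsmul, Pi.sub_apply, Pi.add_apply, x, Pi.single_eq_of_ne hi, zero_add,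
        Nearfield.zero_mul, sub_zero, sub_self]
  refine ⟨_, ?_, hdefect ▸ hN.sub_mem (hN.2.2.2 x y hy lam) (hN.vsmul_mem hy lam)⟩
  rwa [sub_sub, sub_ne_zero]

theorem eq_setOf_forall_notMem_support (hd : ∃ α β lam : R, (α + β) * lam ≠ α * lam + β * lam)
    (hN : IsSubspace N) : N = {x | ∀ j ∉ {j | ∃ y ∈ N, y j ≠ 0}, x j = 0} := by
  ext x
  refine ⟨fun hx j hj => not_not.mp fun hxj => hj ⟨x, hx, hxj⟩, fun hx => ?_⟩
  rw [← Finset.univ_sum_single x]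
  refine hN.sum_mem _ fun j _ => ?_
  by_cases hj : ∃ y ∈ N, y j ≠ 0
  · obtain ⟨y, hy, hyj⟩ := hj
    obtain ⟨δ, hδ, hδN⟩ := exists_single_mem hd hN hy hyj
    exact hN.single_mem_of_single_mem hδ hδN (x j)
  · rw [hx j hj, Pi.single_zero]
    exact hN.1

end IsSubspace

theorem isSubspace_nvSpan (V : Set (Fin n → R)) : IsSubspace (nvSpan V) :=
  ⟨fun _ hN _ => hN.1, fun x hx y hy N hN hV => hN.2.1 x (hx N hN hV) y (hy N hN hV),
    fun x hx N hN hV => hN.2.2.1 x (hx N hN hV), fun x y hy r N hN hV => hN.2.2.2 x y (hy N hN hV) r⟩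

theorem span_classification_general (hd : ∃ α β lam : R, (α + β) * lam ≠ α * lam + β * lam)
    {k : ℕ} (v : Fin k → (Fin n → R)) :
    ∃ J : Set (Fin n),
      nvSpan (Set.range v) = { x : Fin n → R | ∀ j ∉ J, x j = 0 } :=
  ⟨_, (isSubspace_nvSpan _).eq_setOf_forall_notMem_support hd⟩

/-- in a non-distributive nearfield, the span of finitely many
vectors of `R^n` is a coordinate subspace `{x | x_j = 0 for all j ∉ J}`. -/
theorem span_classification (hd : ∃ α β lam : R, (α + β) * lam ≠ α * lam + β * lam)
    (hn : 0 < n) {k : ℕ} (v : Fin k → (Fin n → R)) :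
    ∃ J : Set (Fin n),
      nvSpan (Set.range v) = { x : Fin n → R | ∀ j ∉ J, x j = 0 } :=
  span_classification_general hd v
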